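/- Let u ∈ {0,1}^T and let Ψ₁, Ψ₀ ⊆ ℝ^T be compact sets. The bilevel quantity d_pos = max_{u ∈ {0,1}^T, u≠0} ( max_{P₁ ∈ Ψ₁} uᵀP₁ − max_{P₀ ∈ Ψ₀} uᵀP₀ ) satisfies: d_pos > 0 or d_neg = max_{u} ( min_{P₀ ∈ Ψ₀} uᵀP₀ − min_{P₁ ∈ Ψ₁} uᵀP₁ ) > 0 holds if and only if there exists a nonzero binary u with Ψ₁ ⊄ {P | min_{Ψ₀} uᵀP ≤ uᵀP ≤ max_{Ψ₀} uᵀP}. In particular, if Ψ₀ is exactly the polytope {P | min_{Ψ₀} uᵀP ≤ uᵀP ≤ max_{Ψ₀} uᵀP, ∀ nonzero u ∈ {0,1}^T}, then max{d_pos, d_neg} ≤ 0 if and only if Ψ₁ ⊆ Ψ₀. -/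

import Mathlib

/-- `u` is a binary vector: each component is 0 or 1. -/
def IsBinaryVec {T : ℕ} (u : Fin T → ℝ) : Prop := ∀ t, u t = 0 ∨ u t = 1

/-- The slab `{P | min_{Ψ₀} uᵀP ≤ uᵀP ≤ max_{Ψ₀} uᵀP}` of `Ψ₀` in direction `u`. -/
noncomputable def dirSlab {T : ℕ} (Ψ₀ : Set (Fin T → ℝ)) (u : Fin T → ℝ) :
    Set (Fin T → ℝ) :=
  {P | sInf ((fun Q => ∑ t, u t * Q t) '' Ψ₀) ≤ ∑ t, u t * P t ∧
       ∑ t, u t * P t ≤ sSup ((fun Q => ∑ t, u t * Q t) '' Ψ₀)}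

/-! A nonempty compact `Ψ₁` lies in the `u`-slab of `Ψ₀` exactly when the bounded set of values
of `uᵀP` on `Ψ₁` lies in `[min_{Ψ₀} uᵀP, max_{Ψ₀} uᵀP]`, i.e. when neither gap in direction `u`
is positive. Under the exact aggregation property `Ψ₀` is the intersection of these slabs, so
`Ψ₁ ⊆ Ψ₀` says that `Ψ₁` lies in every slab. -/

open Set

theorem subset_Icc_iff_le_csInf_and_csSup_le {α : Type*} [ConditionallyCompleteLattice α]
    {s : Set α} {a b : α} (hne : s.Nonempty) (hbelow : BddBelow s) (habove : BddAbove s) :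
    s ⊆ Icc a b ↔ a ≤ sInf s ∧ sSup s ≤ b := by
  rw [le_csInf_iff hbelow hne, csSup_le_iff habove hne, ← forall₂_and]
  rfl

theorem subset_dirSlab_iff {T : ℕ} {Ψ₀ Ψ₁ : Set (Fin T → ℝ)} (h₁ne : Ψ₁.Nonempty)
    (h₁cpt : IsCompact Ψ₁) (u : Fin T → ℝ) :
    Ψ₁ ⊆ dirSlab Ψ₀ u ↔
      sSup ((fun P => ∑ t, u t * P t) '' Ψ₁) ≤ sSup ((fun P => ∑ t, u t * P t) '' Ψ₀) ∧
      sInf ((fun P => ∑ t, u t * P t) '' Ψ₀) ≤ sInf ((fun P => ∑ t, u t * P t) '' Ψ₁) := by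
  have hcpt : IsCompact ((fun P => ∑ t, u t * P t) '' Ψ₁) := h₁cpt.image (by fun_prop)
  rw [and_comm, ← subset_Icc_iff_le_csInf_and_csSup_le (h₁ne.image _) hcpt.bddBelow
    hcpt.bddAbove, image_subset_iff]
  rfl

theorem stmt13_general {T : ℕ} (Ψ₀ Ψ₁ : Set (Fin T → ℝ))
    (h₁ne : Ψ₁.Nonempty) (h₁cpt : IsCompact Ψ₁) :
    ((∃ u : Fin T → ℝ, IsBinaryVec u ∧ u ≠ 0 ∧
        (sSup ((fun P => ∑ t, u t * P t) '' Ψ₀) < sSup ((fun P => ∑ t, u t * P t) '' Ψ₁) ∨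
         sInf ((fun P => ∑ t, u t * P t) '' Ψ₁) < sInf ((fun P => ∑ t, u t * P t) '' Ψ₀))) ↔
      (∃ u : Fin T → ℝ, IsBinaryVec u ∧ u ≠ 0 ∧ ¬ Ψ₁ ⊆ dirSlab Ψ₀ u)) ∧
    (Ψ₀ = {P | ∀ u : Fin T → ℝ, IsBinaryVec u → u ≠ 0 → P ∈ dirSlab Ψ₀ u} →
      ((∀ u : Fin T → ℝ, IsBinaryVec u → u ≠ 0 →
          sSup ((fun P => ∑ t, u t * P t) '' Ψ₁) ≤ sSup ((fun P => ∑ t, u t * P t) '' Ψ₀) ∧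
          sInf ((fun P => ∑ t, u t * P t) '' Ψ₀) ≤ sInf ((fun P => ∑ t, u t * P t) '' Ψ₁)) ↔
        Ψ₁ ⊆ Ψ₀)) := by
  simp only [← subset_dirSlab_iff h₁ne h₁cpt]
  refine ⟨exists_congr fun u => ?_, fun hEAM => ⟨fun h P hP => ?_, fun h u hb hne P hP => ?_⟩⟩
  · rw [subset_dirSlab_iff h₁ne h₁cpt, not_and_or, not_le, not_le]
  · exact hEAM.superset fun u hb hne => h u hb hne hP
  · exact hEAM.subset (h hP) u hb hne

/-- `d_pos > 0 ∨ d_neg > 0` (i.e., some nonzero binary direction has a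
positive gap) iff there is a nonzero binary `u` with `Ψ₁ ⊄` the `u`-slab of `Ψ₀`; and if
`Ψ₀` equals the polytope of all its binary-direction slabs (the EAM property), then
`max{d_pos, d_neg} ≤ 0` iff `Ψ₁ ⊆ Ψ₀`. -/
theorem stmt13 {T : ℕ} (Ψ₀ Ψ₁ : Set (Fin T → ℝ))
    (h₀ne : Ψ₀.Nonempty) (h₀cpt : IsCompact Ψ₀) (h₀conv : Convex ℝ Ψ₀)
    (h₁ne : Ψ₁.Nonempty) (h₁cpt : IsCompact Ψ₁) (h₁conv : Convex ℝ Ψ₁) :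
    ((∃ u : Fin T → ℝ, IsBinaryVec u ∧ u ≠ 0 ∧
        (sSup ((fun P => ∑ t, u t * P t) '' Ψ₀) < sSup ((fun P => ∑ t, u t * P t) '' Ψ₁) ∨
         sInf ((fun P => ∑ t, u t * P t) '' Ψ₁) < sInf ((fun P => ∑ t, u t * P t) '' Ψ₀))) ↔
      (∃ u : Fin T → ℝ, IsBinaryVec u ∧ u ≠ 0 ∧ ¬ Ψ₁ ⊆ dirSlab Ψ₀ u)) ∧
    (Ψ₀ = {P | ∀ u : Fin T → ℝ, IsBinaryVec u → u ≠ 0 → P ∈ dirSlab Ψ₀ u} →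
      ((∀ u : Fin T → ℝ, IsBinaryVec u → u ≠ 0 →
          sSup ((fun P => ∑ t, u t * P t) '' Ψ₁) ≤ sSup ((fun P => ∑ t, u t * P t) '' Ψ₀) ∧
          sInf ((fun P => ∑ t, u t * P t) '' Ψ₀) ≤ sInf ((fun P => ∑ t, u t * P t) '' Ψ₁)) ↔
        Ψ₁ ⊆ Ψ₀)) :=
  stmt13_general Ψ₀ Ψ₁ h₁ne h₁cpt
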